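/- Massive-MIMO full-power feasibility threshold (deterministic core of Theorem 8, eq. (68)): Let N_a ≥ 1 and n ≥ 1 be integers, σ_b, σ_w, λ_b, λ_w, δ, P > 0 real numbers, and let u_b, u_w ∈ ℂ^{N_a} be unit vectors. Let W_b := λ_b • (outer product of u_b with itself) and W_w := λ_w • (outer product of u_w with itself). If |⟨u_w, u_b⟩|² ≤ √2·σ_w²·δ/(√n·λ_w·P), then the full-power covariance Q₀ := P • (outer product of u_b with itself) satisfies n·D(W_w, Q₀) ≤ 2δ², and consequently sSup { R(Q) : Q an N_a×N_a complex Hermitian positive semidefinite matrix with (Q.trace).re ≤ P and n·D(W_w, Q) ≤ 2δ² } = Real.log(1 + λ_b·P/σ_b²), the non-LPD-constrained capacity. -/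

import Mathlib

open Matrix
open scoped ComplexOrder InnerProductSpace

/-- The detection (relative-entropy) functional at Willie:
`D(W, Q) = log (det (1 + σ_w⁻² W Q)).re + ((1 + σ_w⁻² W Q)⁻¹.trace).re − N_a`. -/
noncomputable def Dfun {Na : ℕ} (σw : ℝ) (W Q : Matrix (Fin Na) (Fin Na) ℂ) : ℝ :=
  Real.log ((1 + (σw ^ 2)⁻¹ • (W * Q)).det.re)
    + (((1 + (σw ^ 2)⁻¹ • (W * Q))⁻¹).trace).re - Na

/-- The rate functional for Bob's channel: `R(Q) = log (det (1 + σ_b⁻² W_b Q)).re`. -/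
noncomputable def Rfun {Na : ℕ} (σb : ℝ) (Wb Q : Matrix (Fin Na) (Fin Na) ℂ) : ℝ :=
  Real.log ((1 + (σb ^ 2)⁻¹ • (Wb * Q)).det.re)

/-- The outer product `u uᴴ` of a vector with itself, with `(i,j)` entry `u i * conj (u j)`. -/
noncomputable def outer {Na : ℕ} (u : EuclideanSpace ℂ (Fin Na)) :
    Matrix (Fin Na) (Fin Na) ℂ :=
  Matrix.of fun i j => u i * star (u j)

/-!
For a rank-one channel `W = λ u uᴴ` the matrix `σ⁻² W Q = v wᴴ` has rank one, so the matrix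
determinant lemma and the Sherman–Morrison formula give `det (1 + v wᴴ) = 1 + t` and
`tr (1 + v wᴴ)⁻¹ = N_a - t / (1 + t)` with `t = σ⁻² λ uᴴ Q u ≥ 0`. At `Q₀ = P u_b u_bᴴ` this is
`t = λ_w P |⟨u_w, u_b⟩|² / σ_w²`; the threshold says `√n t ≤ √2 δ`, and
`log (1 + t) - t / (1 + t) ≤ t²` yields `n D ≤ 2 δ²`. For the capacity, a unit vector satisfies
`uᴴ Q u ≤ tr Q ≤ P` (split `Q` into rank-one pieces `v vᴴ` and use Cauchy–Schwarz), so
`R(Q) ≤ log (1 + λ_b P / σ_b²)`, with equality at the feasible `Q₀`.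
-/

namespace Matrix

section RankOneUpdate

variable {K n : Type*} [Field K] [Fintype n] [DecidableEq n]

theorem det_one_add_vecMulVec (v w : n → K) : (1 + vecMulVec v w).det = 1 + w ⬝ᵥ v := by
  rw [vecMulVec_eq Unit, det_one_add_replicateCol_mul_replicateRow]

theorem inv_one_add_vecMulVec {v w : n → K} (h : 1 + w ⬝ᵥ v ≠ 0) :
    (1 + vecMulVec v w)⁻¹ = 1 - (1 + w ⬝ᵥ v)⁻¹ • vecMulVec v w := by
  refine inv_eq_right_inv ?_
  have hsq : vecMulVec v w * vecMulVec v w = (w ⬝ᵥ v) • vecMulVec v w := by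
    rw [vecMulVec_mul_vecMulVec, vecMulVec_smul]
  rw [mul_sub, mul_one, add_mul, one_mul, Matrix.mul_smul, hsq, smul_smul, ← add_smul,
    ← mul_one_add, inv_mul_cancel₀ h, one_smul, add_sub_cancel_right]

theorem trace_inv_one_add_vecMulVec {v w : n → K} (h : 1 + w ⬝ᵥ v ≠ 0) :
    (1 + vecMulVec v w)⁻¹.trace = Fintype.card n - w ⬝ᵥ v / (1 + w ⬝ᵥ v) := by
  rw [inv_one_add_vecMulVec h, trace_sub, trace_one, trace_smul, trace_vecMulVec, dotProduct_comm,
    smul_eq_mul, inv_mul_eq_div]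

end RankOneUpdate

section RankOneProjection

variable {𝕜 n : Type*} [RCLike 𝕜] [Fintype n]

theorem trace_vecMulVec_self_star (w : EuclideanSpace 𝕜 n) :
    (vecMulVec w.ofLp (star w.ofLp)).trace = (‖w‖ ^ 2 : ℝ) := by
  rw [trace_vecMulVec, ← EuclideanSpace.inner_eq_star_dotProduct, inner_self_eq_norm_sq_to_K]
  push_cast
  rfl

theorem star_dotProduct_vecMulVec_self_star_mulVec (x w : EuclideanSpace 𝕜 n) :
    star x.ofLp ⬝ᵥ vecMulVec w.ofLp (star w.ofLp) *ᵥ x.ofLp = (‖⟪x, w⟫_𝕜‖ ^ 2 : ℝ) := by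
  rw [dotProduct_mulVec, vecMul_vecMulVec, smul_dotProduct, smul_eq_mul, dotProduct_comm _ w.ofLp,
    dotProduct_comm _ x.ofLp, ← EuclideanSpace.inner_eq_star_dotProduct,
    ← EuclideanSpace.inner_eq_star_dotProduct, ← inner_conj_symm, RCLike.norm_conj, RCLike.conj_mul]
  push_cast
  rfl

theorem PosSemidef.star_dotProduct_mulVec_le_trace {Q : Matrix n n 𝕜} (hQ : Q.PosSemidef)
    {u : EuclideanSpace 𝕜 n} (hu : ‖u‖ ≤ 1) : star u.ofLp ⬝ᵥ Q *ᵥ u.ofLp ≤ Q.trace := by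
  obtain ⟨m, v, rfl⟩ := posSemidef_iff_eq_sum_vecMulVec.mp hQ
  rw [sum_mulVec, dotProduct_sum, trace_sum]
  refine Finset.sum_le_sum fun i _ => ?_
  rw [← WithLp.ofLp_toLp 2 (v i), star_dotProduct_vecMulVec_self_star_mulVec,
    trace_vecMulVec_self_star, RCLike.ofReal_le_ofReal]
  calc ‖⟪u, WithLp.toLp 2 (v i)⟫_𝕜‖ ^ 2 ≤ (‖u‖ * ‖WithLp.toLp 2 (v i)‖) ^ 2 := by
        gcongr
        exact norm_inner_le_norm _ _
    _ ≤ ‖WithLp.toLp 2 (v i)‖ ^ 2 := by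
        gcongr
        exact mul_le_of_le_one_left (norm_nonneg _) hu

end RankOneProjection

end Matrix

theorem Real.log_one_add_sub_div_le_sq {t : ℝ} (ht : 0 ≤ t) :
    Real.log (1 + t) - t / (1 + t) ≤ t ^ 2 := by
  have hlog : Real.log (1 + t) ≤ t := by
    linarith [Real.log_le_sub_one_of_pos (by linarith : 0 < 1 + t)]
  have hsub : t - t / (1 + t) = t ^ 2 / (1 + t) := by
    field_simp
    ring
  have hdiv : t ^ 2 / (1 + t) ≤ t ^ 2 := div_le_self (by positivity) (by linarith)
  linarith

theorem Real.mul_log_one_add_sub_div_le_sq {n t a : ℝ} (hn : 0 ≤ n) (ht : 0 ≤ t)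
    (h : Real.sqrt n * t ≤ a) : n * (Real.log (1 + t) - t / (1 + t)) ≤ a ^ 2 :=
  calc n * (Real.log (1 + t) - t / (1 + t)) ≤ n * t ^ 2 := by
        gcongr
        exact Real.log_one_add_sub_div_le_sq ht
    _ = (Real.sqrt n * t) ^ 2 := by rw [mul_pow, Real.sq_sqrt hn]
    _ ≤ a ^ 2 := by gcongr

section RankOneChannel

variable {Na : ℕ} {σ : ℝ} {W Q : Matrix (Fin Na) (Fin Na) ℂ}

theorem outer_eq_vecMulVec (u : EuclideanSpace ℂ (Fin Na)) :
    outer u = vecMulVec u.ofLp (star u.ofLp) :=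
  rfl

theorem Rfun_eq_of_eq_vecMulVec {v w : Fin Na → ℂ} {t : ℝ}
    (hWQ : (σ ^ 2)⁻¹ • (W * Q) = vecMulVec v w) (ht : w ⬝ᵥ v = t) :
    Rfun σ W Q = Real.log (1 + t) := by
  rw [Rfun, hWQ, det_one_add_vecMulVec, ht]
  norm_cast

theorem Dfun_eq_of_eq_vecMulVec {v w : Fin Na → ℂ} {t : ℝ}
    (hWQ : (σ ^ 2)⁻¹ • (W * Q) = vecMulVec v w) (ht : w ⬝ᵥ v = t) (ht' : 1 + t ≠ 0) :
    Dfun σ W Q = Real.log (1 + t) - t / (1 + t) := by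
  have h : 1 + w ⬝ᵥ v ≠ 0 := by
    rw [ht]
    exact_mod_cast ht'
  rw [Dfun, hWQ, det_one_add_vecMulVec, trace_inv_one_add_vecMulVec h, ht, Fintype.card_fin]
  norm_cast
  ring

variable (σ) (u : EuclideanSpace ℂ (Fin Na))

theorem exists_inv_sq_smul_smul_outer_mul_eq_vecMulVec (l : ℝ) (hQ : Q.PosSemidef) :
    ∃ v w : Fin Na → ℂ, (σ ^ 2)⁻¹ • ((l : ℂ) • outer u * Q) = vecMulVec v w ∧
      w ⬝ᵥ v = ((σ ^ 2)⁻¹ * l * (star u.ofLp ⬝ᵥ Q *ᵥ u.ofLp).re : ℝ) := by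
  refine ⟨((σ ^ 2)⁻¹ * l) • u.ofLp, star u.ofLp ᵥ* Q, ?_, ?_⟩
  · rw [outer_eq_vecMulVec, smul_mul, vecMulVec_mul, smul_vecMulVec, ← Complex.coe_smul, smul_smul,
      ← Complex.ofReal_mul, Complex.coe_smul]
  · have hreal : star u.ofLp ⬝ᵥ Q *ᵥ u.ofLp = (star u.ofLp ⬝ᵥ Q *ᵥ u.ofLp).re :=
      Complex.eq_re_of_ofReal_le (by rw [Complex.ofReal_zero]; exact hQ.dotProduct_mulVec_nonneg _)
    rw [dotProduct_smul, ← dotProduct_mulVec, Complex.real_smul,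
      Complex.ofReal_mul _ (Complex.re _), ← hreal]

variable {l : ℝ}

theorem Rfun_smul_outer (hQ : Q.PosSemidef) :
    Rfun σ ((l : ℂ) • outer u) Q
      = Real.log (1 + (σ ^ 2)⁻¹ * l * (star u.ofLp ⬝ᵥ Q *ᵥ u.ofLp).re) := by
  obtain ⟨v, w, hWQ, ht⟩ := exists_inv_sq_smul_smul_outer_mul_eq_vecMulVec σ u l hQ
  exact Rfun_eq_of_eq_vecMulVec hWQ ht

theorem Dfun_smul_outer (hl : 0 ≤ l) (hQ : Q.PosSemidef) :
    Dfun σ ((l : ℂ) • outer u) Q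
      = Real.log (1 + (σ ^ 2)⁻¹ * l * (star u.ofLp ⬝ᵥ Q *ᵥ u.ofLp).re)
        - (σ ^ 2)⁻¹ * l * (star u.ofLp ⬝ᵥ Q *ᵥ u.ofLp).re
          / (1 + (σ ^ 2)⁻¹ * l * (star u.ofLp ⬝ᵥ Q *ᵥ u.ofLp).re) := by
  obtain ⟨v, w, hWQ, ht⟩ := exists_inv_sq_smul_smul_outer_mul_eq_vecMulVec σ u l hQ
  have hx : 0 ≤ (star u.ofLp ⬝ᵥ Q *ᵥ u.ofLp).re := hQ.re_dotProduct_nonneg _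
  exact Dfun_eq_of_eq_vecMulVec hWQ ht (by positivity)

theorem Rfun_smul_outer_le {P : ℝ} (hl : 0 ≤ l) (hu : ‖u‖ ≤ 1) (hQ : Q.PosSemidef)
    (hP : Q.trace.re ≤ P) : Rfun σ ((l : ℂ) • outer u) Q ≤ Real.log (1 + (σ ^ 2)⁻¹ * l * P) := by
  have hx : 0 ≤ (star u.ofLp ⬝ᵥ Q *ᵥ u.ofLp).re := hQ.re_dotProduct_nonneg _
  have hxP := (Complex.re_le_re (hQ.star_dotProduct_mulVec_le_trace hu)).trans hP
  rw [Rfun_smul_outer σ u hQ]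
  gcongr

end RankOneChannel

theorem star_dotProduct_smul_outer_mulVec {Na : ℕ} (P : ℝ) (u x : EuclideanSpace ℂ (Fin Na)) :
    star x.ofLp ⬝ᵥ ((P : ℂ) • outer u) *ᵥ x.ofLp = (P * ‖⟪x, u⟫_ℂ‖ ^ 2 : ℝ) := by
  rw [smul_mulVec, dotProduct_smul, outer_eq_vecMulVec, star_dotProduct_vecMulVec_self_star_mulVec,
    smul_eq_mul, Complex.ofReal_mul]
  rfl

theorem posSemidef_smul_outer {Na : ℕ} {P : ℝ} (hP : 0 ≤ P) (u : EuclideanSpace ℂ (Fin Na)) :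
    ((P : ℂ) • outer u).PosSemidef :=
  (posSemidef_vecMulVec_self_star u.ofLp).smul (by exact_mod_cast hP)

theorem massive_mimo_full_power_threshold_general (Na n : ℕ) (hn : 1 ≤ n)
    (σb σw lb lw δ P : ℝ) (hσw : 0 < σw) (hlb : 0 < lb) (hlw : 0 < lw)
    (hP : 0 < P)
    (ub uw : EuclideanSpace ℂ (Fin Na)) (hub : ‖ub‖ = 1)
    (hthr : ‖(⟪uw, ub⟫_ℂ)‖ ^ 2 ≤ Real.sqrt 2 * σw ^ 2 * δ / (Real.sqrt n * lw * P)) :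
    (n : ℝ) * Dfun σw ((lw : ℂ) • outer uw) ((P : ℂ) • outer ub) ≤ 2 * δ ^ 2 ∧
    sSup {r : ℝ | ∃ Q : Matrix (Fin Na) (Fin Na) ℂ, Q.PosSemidef ∧
        (Q.trace).re ≤ P ∧
        (n : ℝ) * Dfun σw ((lw : ℂ) • outer uw) Q ≤ 2 * δ ^ 2 ∧
        r = Rfun σb ((lb : ℂ) • outer ub) Q}
      = Real.log (1 + lb * P / σb ^ 2) := by
  rw [show lb * P / σb ^ 2 = (σb ^ 2)⁻¹ * lb * P by ring]
  have hQ₀ := posSemidef_smul_outer hP.le ub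
  set t := (σw ^ 2)⁻¹ * lw * (P * ‖⟪uw, ub⟫_ℂ‖ ^ 2)
  have hsqrt_n : 0 < Real.sqrt n := Real.sqrt_pos.mpr (by exact_mod_cast hn)
  have hsqrt_n_t : Real.sqrt n * t ≤ Real.sqrt 2 * δ := by
    rw [le_div_iff₀ (by positivity)] at hthr
    calc Real.sqrt n * t = (σw ^ 2)⁻¹ * (‖⟪uw, ub⟫_ℂ‖ ^ 2 * (Real.sqrt n * lw * P)) := by ring
      _ ≤ (σw ^ 2)⁻¹ * (Real.sqrt 2 * σw ^ 2 * δ) := by gcongr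
      _ = Real.sqrt 2 * δ := by field_simp
  have hfeas : (n : ℝ) * Dfun σw ((lw : ℂ) • outer uw) ((P : ℂ) • outer ub) ≤ 2 * δ ^ 2 := by
    rw [Dfun_smul_outer σw uw hlw.le hQ₀, star_dotProduct_smul_outer_mulVec, Complex.ofReal_re,
      ← Real.sq_sqrt zero_le_two, ← mul_pow]
    exact Real.mul_log_one_add_sub_div_le_sq (Nat.cast_nonneg n) (by positivity) hsqrt_n_t
  refine ⟨hfeas, IsGreatest.csSup_eq ⟨⟨_, hQ₀, ?_, hfeas, ?_⟩, ?_⟩⟩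
  · rw [trace_smul, outer_eq_vecMulVec, trace_vecMulVec_self_star, hub]
    simp
  · rw [Rfun_smul_outer σb ub hQ₀, star_dotProduct_smul_outer_mulVec, Complex.ofReal_re,
      inner_self_eq_norm_sq_to_K, hub]
    norm_num
  · rintro r ⟨Q, hQ, htr, -, rfl⟩
    exact Rfun_smul_outer_le σb ub hlb.le hub.le hQ htr

/-- **Massive-MIMO full-power feasibility threshold (deterministic core of Theorem 8, eq. (68)).**
If `|⟨u_w, u_b⟩|² ≤ √2·σ_w²·δ/(√n·λ_w·P)`, then the full-power covariance
`Q₀ = P u_b u_bᴴ` satisfies `n·D(W_w, Q₀) ≤ 2δ²`, and the `δ`-PD constrained capacity equals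
the unconstrained capacity `log(1 + λ_b·P/σ_b²)`. -/
theorem massive_mimo_full_power_threshold (Na n : ℕ) (hNa : 1 ≤ Na) (hn : 1 ≤ n)
    (σb σw lb lw δ P : ℝ) (hσb : 0 < σb) (hσw : 0 < σw) (hlb : 0 < lb) (hlw : 0 < lw)
    (hδ : 0 < δ) (hP : 0 < P)
    (ub uw : EuclideanSpace ℂ (Fin Na)) (hub : ‖ub‖ = 1) (huw : ‖uw‖ = 1)
    (hthr : ‖(⟪uw, ub⟫_ℂ)‖ ^ 2 ≤ Real.sqrt 2 * σw ^ 2 * δ / (Real.sqrt n * lw * P)) :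
    (n : ℝ) * Dfun σw ((lw : ℂ) • outer uw) ((P : ℂ) • outer ub) ≤ 2 * δ ^ 2 ∧
    sSup {r : ℝ | ∃ Q : Matrix (Fin Na) (Fin Na) ℂ, Q.PosSemidef ∧
        (Q.trace).re ≤ P ∧
        (n : ℝ) * Dfun σw ((lw : ℂ) • outer uw) Q ≤ 2 * δ ^ 2 ∧
        r = Rfun σb ((lb : ℂ) • outer ub) Q}
      = Real.log (1 + lb * P / σb ^ 2) :=
  massive_mimo_full_power_threshold_general Na n hn σb σw lb lw δ P hσw hlb hlw hP ub uw hub hthr
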